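/- arXiv:1608.01364 — 5 statements merged into one kernel-verified Lean document; each statement's English description precedes it below -/
import Mathlib

section
/- Let k ≥ 1 and n ≥ 1, let p₁, …, p_k ≥ 0 with Σ_{j=1}^k p_j = 1, and let X₁, …, X_n be i.i.d. random variables with values in {1, …, k} such that P(X_i = j) = p_j for each j. For j = 1, …, k set N_j = #{ 1 ≤ i ≤ n : X_i = j }, so that (N₁, …, N_k) is Multinomial(n; p₁, …, p_k). Then for every nonnegative nondecreasing function f : ℕ → ℝ, E[ Π_{j=1}^k f(N_j) ] ≤ Π_{j=1}^k E[ f(N_j) ]. -/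
/-!
The counts of a multinomial sample are negatively associated: if `A` and `B` are disjoint sets
of colours and `F`, `G` are nondecreasing functions of the count vector depending only on the
counts in `A`, resp. `B`, then `E[F G] ≤ E[F] E[G]`. This goes by induction on the sample size,
conditioning on the colour `c` of the first draw. Given `c`, the induction hypothesis applies to
the shifted functions; averaging over `c` is then a Chebyshev-type inequality, because `c` lies
outside `A` or outside `B`, so one of the two conditional means equals the unconditional one while
the other dominates it. Splitting off one factor `f(N_j)` at a time gives the theorem.
-/

open MeasureTheory ProbabilityTheory Finset

theorem integral_comp_eq_sum_prod {Ω κ ι : Type*} [MeasurableSpace Ω] {P : Measure Ω}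
    [IsProbabilityMeasure P] [Fintype κ] [DecidableEq κ] [Fintype ι] [MeasurableSpace ι]
    [MeasurableSingletonClass ι] {X : κ → Ω → ι} (hX : ∀ i, Measurable (X i))
    (hindep : iIndepFun X P) {p : ι → ℝ} (hp : ∀ j, 0 ≤ p j)
    (hlaw : ∀ i j, P {ω | X i ω = j} = ENNReal.ofReal (p j)) (h : (κ → ι) → ℝ) :
    ∫ ω, h (fun i => X i ω) ∂P = ∑ x, (∏ i, p (x i)) * h x := by
  rw [← integral_map (by fun_prop) (measurable_of_finite h).aestronglyMeasurable,
    hindep.map_fun_eq_pi_map (fun i => (hX i).aemeasurable), integral_fintype .of_finite]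
  refine sum_congr rfl fun x _ => ?_
  rw [measureReal_def, Measure.pi_singleton, ENNReal.toReal_prod, smul_eq_mul]
  congr 1
  refine prod_congr rfl fun i _ => ?_
  rw [Measure.map_apply (hX i) (measurableSet_singleton _)]
  simp [Set.preimage, hlaw, hp]

theorem sum_mul_mul_le_of_eq_or_eq {ι : Type*} [Fintype ι] {p φ ψ : ι → ℝ} {a b : ℝ}
    (hp : ∀ c, 0 ≤ p c) (hpsum : ∑ c, p c = 1) (hφ : ∀ c, a ≤ φ c) (hψ : ∀ c, b ≤ ψ c)
    (h : ∀ c, φ c = a ∨ ψ c = b) :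
    ∑ c, p c * (φ c * ψ c) ≤ (∑ c, p c * φ c) * (∑ c, p c * ψ c) := by
  have mean_ge {χ : ι → ℝ} {m : ℝ} (hχ : ∀ c, m ≤ χ c) : m ≤ ∑ c, p c * χ c :=
    calc m = ∑ c, p c * m := by rw [← sum_mul, hpsum, one_mul]
      _ ≤ ∑ c, p c * χ c := sum_le_sum fun c _ => mul_le_mul_of_nonneg_left (hχ c) (hp c)
  -- `(φ - a) * (ψ - b)` vanishes identically, so the covariance is `-(Eφ - a) * (Eψ - b) ≤ 0`.
  have hlin : ∀ c, p c * (φ c * ψ c) = a * (p c * ψ c) + b * (p c * φ c) - a * b * p c :=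
    fun c => by rcases h c with h | h <;> rw [h] <;> ring
  rw [sum_congr rfl fun c _ => hlin c, sum_sub_distrib, sum_add_distrib, ← mul_sum, ← mul_sum,
    ← mul_sum, hpsum]
  nlinarith [mul_nonneg (sub_nonneg.2 (mean_ge hφ)) (sub_nonneg.2 (mean_ge hψ))]

section

variable {ι : Type*} [DecidableEq ι]

def colorCount {n : ℕ} (x : Fin n → ι) (j : ι) : ℕ := #{i | x i = j}

lemma colorCount_cons {n : ℕ} (c : ι) (y : Fin n → ι) :
    colorCount (Fin.cons c y : Fin (n + 1) → ι) = Pi.single c 1 + colorCount y := by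
  ext j
  simp only [colorCount, card_filter, Fin.sum_univ_succ, Fin.cons_zero, Fin.cons_succ,
    Pi.add_apply, Pi.single_apply, eq_comm]

lemma DependsOn.comp_single_add {β : Type*} {F : (ι → ℕ) → β} {A : Set ι} (hF : DependsOn F A)
    (c : ι) : DependsOn (fun v => F (Pi.single c 1 + v)) A :=
  fun _ _ h => hF fun j hj => by simp only [Pi.add_apply, h j hj]

lemma DependsOn.single_add_eq {β : Type*} {F : (ι → ℕ) → β} {A : Set ι} (hF : DependsOn F A)
    {c : ι} (hc : c ∉ A) (v : ι → ℕ) : F (Pi.single c 1 + v) = F v :=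
  hF fun j hj => by simp [ne_of_mem_of_not_mem hj hc]

variable [Fintype ι] (p : ι → ℝ)

def multinomialExpect (n : ℕ) (H : (ι → ℕ) → ℝ) : ℝ :=
  ∑ x : Fin n → ι, (∏ i, p (x i)) * H (colorCount x)

lemma multinomialExpect_zero (H : (ι → ℕ) → ℝ) : multinomialExpect p 0 H = H 0 := by
  have : ∀ x : Fin 0 → ι, colorCount x = 0 := fun x => funext fun j => by simp [colorCount]
  simp [multinomialExpect, this]

lemma multinomialExpect_succ (n : ℕ) (H : (ι → ℕ) → ℝ) :
    multinomialExpect p (n + 1) H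
      = ∑ c, p c * multinomialExpect p n (fun v => H (Pi.single c 1 + v)) := by
  rw [multinomialExpect, ← (Fin.consEquiv fun _ => ι).sum_comp, Fintype.sum_prod_type]
  refine sum_congr rfl fun c _ => ?_
  rw [multinomialExpect, mul_sum]
  refine sum_congr rfl fun y _ => ?_
  change (∏ i, p ((Fin.cons c y : Fin (n + 1) → ι) i))
      * H (colorCount (Fin.cons c y : Fin (n + 1) → ι)) = _
  rw [Fin.prod_univ_succ, Fin.cons_zero, colorCount_cons]
  simp only [Fin.cons_succ, mul_assoc]

variable {p}

lemma multinomialExpect_const (hpsum : ∑ c, p c = 1) (n : ℕ) (a : ℝ) :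
    multinomialExpect p n (fun _ => a) = a := by
  induction n with
  | zero => exact multinomialExpect_zero p _
  | succ n ih => simp only [multinomialExpect_succ, ih, ← sum_mul, hpsum, one_mul]

lemma multinomialExpect_mono (hp : ∀ c, 0 ≤ p c) {n : ℕ} {H H' : (ι → ℕ) → ℝ}
    (h : ∀ v, H v ≤ H' v) : multinomialExpect p n H ≤ multinomialExpect p n H' :=
  sum_le_sum fun _ _ => mul_le_mul_of_nonneg_left (h _) (prod_nonneg fun _ _ => hp _)

lemma multinomialExpect_nonneg (hp : ∀ c, 0 ≤ p c) {n : ℕ} {H : (ι → ℕ) → ℝ}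
    (h : ∀ v, 0 ≤ H v) : 0 ≤ multinomialExpect p n H :=
  sum_nonneg fun _ _ => mul_nonneg (prod_nonneg fun _ _ => hp _) (h _)

theorem multinomialExpect_mul_le (hp : ∀ c, 0 ≤ p c) (hpsum : ∑ c, p c = 1) {A B : Set ι}
    (hAB : Disjoint A B) (n : ℕ) {F G : (ι → ℕ) → ℝ} (hFA : DependsOn F A) (hGB : DependsOn G B)
    (hF : Monotone F) (hG : Monotone G) :
    multinomialExpect p n (fun v => F v * G v)
      ≤ multinomialExpect p n F * multinomialExpect p n G := by
  induction n generalizing F G with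
  | zero => simp only [multinomialExpect_zero, le_refl]
  | succ n ih =>
    have shift_mono {H : (ι → ℕ) → ℝ} (hH : Monotone H) (c : ι) :
        Monotone fun v => H (Pi.single c 1 + v) :=
      fun _ _ h => hH (add_le_add le_rfl h)
    rw [multinomialExpect_succ, multinomialExpect_succ, multinomialExpect_succ]
    calc _ ≤ ∑ c, p c * (multinomialExpect p n (fun v => F (Pi.single c 1 + v))
            * multinomialExpect p n (fun v => G (Pi.single c 1 + v))) :=
          sum_le_sum fun c _ => mul_le_mul_of_nonneg_left
            (ih (hFA.comp_single_add c) (hGB.comp_single_add c) (shift_mono hF c)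
              (shift_mono hG c)) (hp c)
      _ ≤ _ := by
        refine sum_mul_mul_le_of_eq_or_eq (a := multinomialExpect p n F)
          (b := multinomialExpect p n G) hp hpsum
          (fun c => multinomialExpect_mono hp fun v => hF le_add_self)
          (fun c => multinomialExpect_mono hp fun v => hG le_add_self) fun c => ?_
        by_cases hc : c ∈ A
        · exact .inr (congrArg _ (funext (hGB.single_add_eq (hAB.notMem_of_mem_left hc))))
        · exact .inl (congrArg _ (funext (hFA.single_add_eq hc)))

theorem multinomialExpect_prod_le (hp : ∀ c, 0 ≤ p c) (hpsum : ∑ c, p c = 1) (n : ℕ)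
    {f : ι → ℕ → ℝ} (hf0 : ∀ j m, 0 ≤ f j m) (hf : ∀ j, Monotone (f j)) (S : Finset ι) :
    multinomialExpect p n (fun v => ∏ j ∈ S, f j (v j))
      ≤ ∏ j ∈ S, multinomialExpect p n (fun v => f j (v j)) := by
  induction S using Finset.induction_on with
  | empty => simp only [prod_empty, multinomialExpect_const hpsum, le_refl]
  | insert a S ha ih =>
    simp only [prod_insert ha]
    calc _ ≤ multinomialExpect p n (fun v => f a (v a))
            * multinomialExpect p n (fun v => ∏ j ∈ S, f j (v j)) :=
          multinomialExpect_mul_le hp hpsum (A := {a}) (B := S) (by simpa using ha) n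
            (fun v w h => by rw [h a rfl]) (fun v w h => prod_congr rfl fun j hj => by rw [h j hj])
            (fun v w h => hf a (h a))
            (fun v w h => prod_le_prod (fun j _ => hf0 j _) fun j _ => hf j (h j))
      _ ≤ _ := mul_le_mul_of_nonneg_left ih (multinomialExpect_nonneg hp fun v => hf0 a _)

end

theorem stmt_5_general
    {Ω : Type*} [MeasurableSpace Ω] (P : Measure Ω) [IsProbabilityMeasure P]
    (k n : ℕ)
    (p : Fin k → ℝ) (hp : ∀ j, 0 ≤ p j) (hpsum : ∑ j, p j = 1)
    (X : Fin n → Ω → Fin k) (hXmeas : ∀ i, Measurable (X i))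
    (hindep : iIndepFun X P)
    (hlaw : ∀ i j, P {ω | X i ω = j} = ENNReal.ofReal (p j))
    (f : ℕ → ℝ) (hf0 : ∀ m, 0 ≤ f m) (hfmono : Monotone f) :
    ∫ ω, ∏ j : Fin k, f ((Finset.univ.filter fun i => X i ω = j).card) ∂P
      ≤ ∏ j : Fin k, ∫ ω, f ((Finset.univ.filter fun i => X i ω = j).card) ∂P := by
  have integral_eq (H : (Fin k → ℕ) → ℝ) :
      ∫ ω, H (colorCount fun i => X i ω) ∂P = multinomialExpect p n H :=
    integral_comp_eq_sum_prod hXmeas hindep hp hlaw fun x => H (colorCount x)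
  calc _ = multinomialExpect p n (fun v => ∏ j, f (v j)) := integral_eq _
    _ ≤ ∏ j, multinomialExpect p n (fun v => f (v j)) :=
      multinomialExpect_prod_le hp hpsum n (fun _ => hf0) (fun _ => hfmono) univ
    _ = _ := prod_congr rfl fun j _ => (integral_eq _).symm

/-- If `X₁, …, X_n` are i.i.d. with values in `{1, …, k}` (here `Fin k`) and
`P(Xᵢ = j) = p_j`, and `N_j = #{i : Xᵢ = j}` are the multinomial counts, then for every
nonnegative nondecreasing `f : ℕ → ℝ`, `E[∏_j f(N_j)] ≤ ∏_j E[f(N_j)]`. -/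
theorem stmt_5
    {Ω : Type*} [MeasurableSpace Ω] (P : Measure Ω) [IsProbabilityMeasure P]
    (k n : ℕ) (hk : 1 ≤ k) (hn : 1 ≤ n)
    (p : Fin k → ℝ) (hp : ∀ j, 0 ≤ p j) (hpsum : ∑ j, p j = 1)
    (X : Fin n → Ω → Fin k) (hXmeas : ∀ i, Measurable (X i))
    (hindep : iIndepFun X P)
    (hlaw : ∀ i j, P {ω | X i ω = j} = ENNReal.ofReal (p j))
    (f : ℕ → ℝ) (hf0 : ∀ m, 0 ≤ f m) (hfmono : Monotone f) :
    ∫ ω, ∏ j : Fin k, f ((Finset.univ.filter fun i => X i ω = j).card) ∂P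
      ≤ ∏ j : Fin k, ∫ ω, f ((Finset.univ.filter fun i => X i ω = j).card) ∂P :=
  stmt_5_general P k n p hp hpsum X hXmeas hindep hlaw f hf0 hfmono
end

section
/- Let (Ω, F, P) be a probability space, let m ⊆ m′ ⊆ F be sub-σ-algebras, and let Y and A be bounded real random variables with A measurable with respect to m′. Suppose there exist a constant φ* ∈ ℝ and a bounded m-measurable random variable b such that E[Y | m′] = φ*·A + b almost surely. Then E[ (Y − E[Y | m]) (A − E[A | m]) ] = φ* · E[ (A − E[A | m])² ]. -/
open MeasureTheory

lemma integrable_of_ae_bdd' {Ω : Type*} [F : MeasurableSpace Ω] (P : Measure Ω)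
    [IsProbabilityMeasure P] {u : Ω → ℝ} (hu : AEStronglyMeasurable u P) {C : ℝ}
    (hb : ∀ᵐ ω ∂P, |u ω| ≤ C) : Integrable u P :=
  (integrable_const C).mono' hu (by filter_upwards [hb] with ω h using h)

lemma key_mul_condexp {Ω : Type*} [F : MeasurableSpace Ω] (P : Measure Ω)
    [IsProbabilityMeasure P] {n : MeasurableSpace Ω} (hn : n ≤ F) {h X : Ω → ℝ}
    (hh : StronglyMeasurable[n] h)
    (hhX : Integrable (h * X) P) (hX : Integrable X P) :
    ∫ ω, h ω * X ω ∂P = ∫ ω, h ω * (P[X|n]) ω ∂P := by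
  calc ∫ ω, h ω * X ω ∂P = ∫ ω, (P[h * X|n]) ω ∂P := (integral_condExp hn).symm
    _ = ∫ ω, h ω * (P[X|n]) ω ∂P :=
        integral_congr_ae (condExp_mul_of_stronglyMeasurable_left hh hhX hX)

lemma stmt_6_aux
    {Ω : Type*} (m m' : MeasurableSpace Ω) [F : MeasurableSpace Ω] (P : Measure Ω)
    [IsProbabilityMeasure P] (hmm' : m ≤ m') (hm'F : m' ≤ F)
    (Y A : Ω → ℝ) (hY : Measurable[F] Y) (hA : Measurable[m'] A)
    (hYbdd : ∃ C : ℝ, ∀ᵐ ω ∂P, |Y ω| ≤ C) (hAbdd : ∃ C : ℝ, ∀ᵐ ω ∂P, |A ω| ≤ C)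
    (hAm' : Measurable[m'] A)
    (φstar : ℝ) (b : Ω → ℝ) (hb : Measurable[m] b) (hbbdd : ∃ C : ℝ, ∀ᵐ ω ∂P, |b ω| ≤ C)
    (hmodel : P[Y|m'] =ᵐ[P] fun ω => φstar * A ω + b ω) :
    ∫ ω, (Y ω - (P[Y|m]) ω) * (A ω - (P[A|m]) ω) ∂P
      = φstar * ∫ ω, (A ω - (P[A|m]) ω) ^ 2 ∂P := by
  have hmF : m ≤ F := hmm'.trans hm'F
  obtain ⟨CY, hCY⟩ := hYbdd
  obtain ⟨CA, hCA⟩ := hAbdd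
  obtain ⟨Cb, hCb⟩ := hbbdd
  have hCY' : ∀ᵐ ω ∂P, |Y ω| ≤ |CY| := hCY.mono fun ω h => h.trans (le_abs_self _)
  have hCA' : ∀ᵐ ω ∂P, |A ω| ≤ |CA| := hCA.mono fun ω h => h.trans (le_abs_self _)
  have hCb' : ∀ᵐ ω ∂P, |b ω| ≤ |Cb| := hCb.mono fun ω h => h.trans (le_abs_self _)
  set f := P[Y|m] with hf
  set g := P[A|m] with hg
  -- a.e. bounds on conditional expectations
  have hgb : ∀ᵐ ω ∂P, |g ω| ≤ |CA| := by
    have := ae_bdd_condExp_of_ae_bdd (μ := P) (m := m) (R := ⟨|CA|, abs_nonneg _⟩) hCA'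
    exact this
  have hfb : ∀ᵐ ω ∂P, |f ω| ≤ |CY| := by
    have := ae_bdd_condExp_of_ae_bdd (μ := P) (m := m) (R := ⟨|CY|, abs_nonneg _⟩) hCY'
    exact this
  -- measurability
  have hgsm : StronglyMeasurable[m] g := stronglyMeasurable_condExp
  have hfsm : StronglyMeasurable[m] f := stronglyMeasurable_condExp
  have hgaesm : AEStronglyMeasurable g P := (hgsm.mono hmF).aestronglyMeasurable
  have hfaesm : AEStronglyMeasurable f P := (hfsm.mono hmF).aestronglyMeasurable
  have hAaesm : AEStronglyMeasurable A P := (hA.stronglyMeasurable.mono hm'F).aestronglyMeasurable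
  have hYaesm : AEStronglyMeasurable Y P := hY.stronglyMeasurable.aestronglyMeasurable
  have hbaesm : AEStronglyMeasurable b P := (hb.stronglyMeasurable.mono hmF).aestronglyMeasurable
  -- Ã := A - g
  set T := fun ω => A ω - g ω with hT
  have hTaesm : AEStronglyMeasurable T P := hAaesm.sub hgaesm
  have hTb : ∀ᵐ ω ∂P, |T ω| ≤ |CA| + |CA| := by
    filter_upwards [hCA', hgb] with ω h1 h2
    exact (abs_sub _ _).trans (add_le_add h1 h2)
  have hTint : Integrable T P := integrable_of_ae_bdd' P hTaesm hTb
  have hAint : Integrable A P := integrable_of_ae_bdd' P hAaesm hCA'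
  have hYint : Integrable Y P := integrable_of_ae_bdd' P hYaesm hCY'
  have hgint : Integrable g P := integrable_condExp
  -- product integrability helper
  have prod_int : ∀ {u v : Ω → ℝ} {Cu Cv : ℝ}, AEStronglyMeasurable u P →
      AEStronglyMeasurable v P → (∀ᵐ ω ∂P, |u ω| ≤ Cu) → (∀ᵐ ω ∂P, |v ω| ≤ Cv) →
      Integrable (fun ω => u ω * v ω) P := by
    intro u v Cu Cv hu hv hbu hbv
    refine integrable_of_ae_bdd' P (hu.mul hv) (C := |Cu| * |Cv|) ?_
    filter_upwards [hbu, hbv] with ω h1 h2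
    calc |u ω * v ω| = |u ω| * |v ω| := abs_mul _ _
      _ ≤ |Cu| * |Cv| := by
          exact mul_le_mul (h1.trans (le_abs_self _)) (h2.trans (le_abs_self _))
            (abs_nonneg _) (abs_nonneg _)
  -- P[T|m] = 0 a.e.
  have hT0 : P[T|m] =ᵐ[P] 0 := by
    have h1 : P[T|m] =ᵐ[P] P[A|m] - P[g|m] := condExp_sub hAint hgint m
    have h2 : P[g|m] = g := condExp_of_stronglyMeasurable hmF hgsm hgint
    filter_upwards [h1] with ω e1
    rw [e1, Pi.sub_apply, h2]
    simp [hg]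
  -- orthogonality: for m-strongly measurable bounded h, ∫ h * T = 0
  have orth : ∀ {h : Ω → ℝ} {Ch : ℝ}, StronglyMeasurable[m] h →
      AEStronglyMeasurable h P → (∀ᵐ ω ∂P, |h ω| ≤ Ch) → ∫ ω, h ω * T ω ∂P = 0 := by
    intro h Ch hsm haesm hbnd
    rw [key_mul_condexp P hmF hsm (prod_int haesm hTaesm hbnd hTb) hTint]
    have : ∀ᵐ ω ∂P, h ω * (P[T|m]) ω = 0 := by
      filter_upwards [hT0] with ω e; simp [e]
    rw [integral_congr_ae this, integral_zero]
  -- T is m'-strongly measurable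
  have hTsm' : StronglyMeasurable[m'] T :=
    (hAm'.stronglyMeasurable).sub (hgsm.mono hmm')
  -- Step: ∫ (Y-f)*T = ∫ Y*T - ∫ f*T
  have split : ∫ ω, (Y ω - f ω) * T ω ∂P = ∫ ω, Y ω * T ω ∂P - ∫ ω, f ω * T ω ∂P := by
    have e : ∀ ω, (Y ω - f ω) * T ω = Y ω * T ω - f ω * T ω := fun ω => by ring
    simp_rw [e]
    exact integral_sub (prod_int hYaesm hTaesm hCY' hTb) (prod_int hfaesm hTaesm hfb hTb)
  have hfT0 : ∫ ω, f ω * T ω ∂P = 0 := orth hfsm hfaesm hfb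
  -- ∫ Y*T = ∫ T * P[Y|m'] (tower to m')
  have hYT : ∫ ω, Y ω * T ω ∂P = ∫ ω, T ω * (P[Y|m']) ω ∂P := by
    have := key_mul_condexp P hm'F hTsm'
      (show Integrable (T * Y) P from prod_int hTaesm hYaesm hTb hCY') hYint
    simp_rw [mul_comm (Y _) (T _)]
    exact this
  -- use model
  have hmodel' : ∫ ω, T ω * (P[Y|m']) ω ∂P
      = ∫ ω, T ω * (φstar * A ω + b ω) ∂P := by
    refine integral_congr_ae ?_
    filter_upwards [hmodel] with ω e
    rw [e]
  -- expand
  have expand : ∫ ω, T ω * (φstar * A ω + b ω) ∂P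
      = φstar * ∫ ω, A ω * T ω ∂P + ∫ ω, b ω * T ω ∂P := by
    have e : ∀ ω, T ω * (φstar * A ω + b ω) = φstar * (A ω * T ω) + b ω * T ω :=
      fun ω => by ring
    simp_rw [e]
    rw [integral_add ((prod_int hAaesm hTaesm hCA' hTb).const_mul φstar)
      (prod_int hbaesm hTaesm hCb' hTb), integral_const_mul]
  have hbT0 : ∫ ω, b ω * T ω ∂P = 0 := orth hb.stronglyMeasurable hbaesm hCb'
  -- ∫ A*T = ∫ T^2
  have hAT : ∫ ω, A ω * T ω ∂P = ∫ ω, T ω ^ 2 ∂P := by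
    have e : ∀ ω, A ω * T ω = T ω * T ω + g ω * T ω := fun ω => by
      simp only [hT]; ring
    simp_rw [e]
    rw [integral_add (prod_int hTaesm hTaesm hTb hTb) (prod_int hgaesm hTaesm hgb hTb),
      orth hgsm hgaesm hgb, add_zero]
    simp_rw [sq]
  calc ∫ ω, (Y ω - f ω) * T ω ∂P
      = ∫ ω, Y ω * T ω ∂P - ∫ ω, f ω * T ω ∂P := split
    _ = ∫ ω, T ω * (P[Y|m']) ω ∂P := by rw [hfT0, hYT, sub_zero]
    _ = φstar * ∫ ω, A ω * T ω ∂P + ∫ ω, b ω * T ω ∂P := by rw [hmodel', expand]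
    _ = φstar * ∫ ω, T ω ^ 2 ∂P := by rw [hbT0, hAT, add_zero]

/-- If `m ⊆ m′` are sub-σ-algebras, `Y, A` are bounded real random variables with
`A` being `m′`-measurable, and `E[Y | m′] = φ*·A + b` a.s. for a constant `φ*` and a bounded
`m`-measurable `b`, then `E[(Y − E[Y|m])(A − E[A|m])] = φ* · E[(A − E[A|m])²]`. -/
theorem stmt_6
    {Ω : Type*} (m m' : MeasurableSpace Ω) [F : MeasurableSpace Ω] (P : Measure Ω) [IsProbabilityMeasure P]
    (hmm' : m ≤ m') (hm'F : m' ≤ F)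
    (Y A : Ω → ℝ) (hY : Measurable Y) (hA : Measurable A)
    (hYbdd : ∃ C : ℝ, ∀ᵐ ω ∂P, |Y ω| ≤ C) (hAbdd : ∃ C : ℝ, ∀ᵐ ω ∂P, |A ω| ≤ C)
    (hAm' : Measurable[m'] A)
    (φstar : ℝ) (b : Ω → ℝ) (hb : Measurable[m] b) (hbbdd : ∃ C : ℝ, ∀ᵐ ω ∂P, |b ω| ≤ C)
    (hmodel : P[Y|m'] =ᵐ[P] fun ω => φstar * A ω + b ω) :
    ∫ ω, (Y ω - (P[Y|m]) ω) * (A ω - (P[A|m]) ω) ∂P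
      = φstar * ∫ ω, (A ω - (P[A|m]) ω) ^ 2 ∂P :=
  stmt_6_aux m m' (F := F) P hmm' hm'F Y A hY hAm' hYbdd hAbdd hAm' φstar b hb hbbdd hmodel
end

section
/- Let (Ω, F, P) be a probability space, m ⊆ F a sub-σ-algebra, Y a bounded real random variable, and A a random variable taking values in {0, 1} almost surely. Suppose Y and A are conditionally independent given m, and let e = E[A | m]. If there is an ε > 0 with e ≥ ε almost surely, then E[ A · Y / e ] = E[Y]. -/
open MeasureTheory

/-- If `Y` is bounded, `A ∈ {0,1}` a.s., `Y` and `A` are conditionally independent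
given `m` (in the sense that `E[f(Y)g(A)|m] = E[f(Y)|m]·E[g(A)|m]` a.s. for all bounded
measurable `f, g`), and `e = E[A|m] ≥ ε > 0` a.s., then `E[A·Y/e] = E[Y]`. -/
theorem stmt_8
    {Ω : Type*} (m : MeasurableSpace Ω) [F : MeasurableSpace Ω] (P : Measure Ω) [IsProbabilityMeasure P]
    (hm : m ≤ F)
    (Y A : Ω → ℝ) (hY : Measurable Y) (hA : Measurable A)
    (hYbdd : ∃ c : ℝ, ∀ᵐ ω ∂P, |Y ω| ≤ c)
    (hA01 : ∀ᵐ ω ∂P, A ω = 0 ∨ A ω = 1)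
    (hcondindep : ∀ f g : ℝ → ℝ, Measurable f → Measurable g →
      (∃ cf : ℝ, ∀ x, |f x| ≤ cf) → (∃ cg : ℝ, ∀ x, |g x| ≤ cg) →
      P[fun ω => f (Y ω) * g (A ω)|m]
        =ᵐ[P] fun ω => (P[fun ω' => f (Y ω')|m]) ω * (P[fun ω' => g (A ω')|m]) ω)
    (ε : ℝ) (hε : 0 < ε) (he : ∀ᵐ ω ∂P, ε ≤ (P[A|m]) ω) :
    ∫ ω, A ω * Y ω / (P[A|m]) ω ∂P = ∫ ω, Y ω ∂P := by
  obtain ⟨c, hc⟩ := hYbdd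
  have hYF : Measurable[F] Y := hY
  have hAF : Measurable[F] A := hA
  set e : Ω → ℝ := P[A|m] with he_def
  set c' : ℝ := max c 0 with hc'def
  have hc'0 : (0:ℝ) ≤ c' := le_max_right _ _
  have hcY : ∀ᵐ ω ∂P, |Y ω| ≤ c' := hc.mono fun ω h => h.trans (le_max_left _ _)
  -- truncation functions
  set fY : ℝ → ℝ := fun x => min (max x (-c')) c' with hfYdef
  set gA : ℝ → ℝ := fun x => min (max x 0) 1 with hgAdef
  have hfYm : Measurable fY := (measurable_id.max measurable_const).min measurable_const
  have hgAm : Measurable gA := (measurable_id.max measurable_const).min measurable_const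
  have hfYb : ∀ x, |fY x| ≤ c' := by
    intro x
    rw [abs_le]
    exact ⟨le_min (le_max_right _ _) (by linarith), min_le_right _ _⟩
  have hgAb : ∀ x, |gA x| ≤ 1 := by
    intro x
    rw [abs_le]
    exact ⟨le_min ((by norm_num : (-1:ℝ) ≤ 0).trans (le_max_right _ _)) (by norm_num), min_le_right _ _⟩
  have hfYeq : ∀ᵐ ω ∂P, fY (Y ω) = Y ω := by
    filter_upwards [hcY] with ω h
    obtain ⟨h1, h2⟩ := abs_le.mp h
    simp only [hfYdef]
    rw [max_eq_left h1, min_eq_left h2]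
  have hgAeq : ∀ᵐ ω ∂P, gA (A ω) = A ω := by
    filter_upwards [hA01] with ω h
    rcases h with h | h <;> simp [hgAdef, h]
  -- integrability
  have hYint : Integrable Y P := by
    refine (integrable_const c').mono' (hYF.aestronglyMeasurable (μ := P)) ?_
    filter_upwards [hcY] with ω h
    simpa [Real.norm_eq_abs] using h
  have hAint : Integrable A P := by
    refine (integrable_const (1:ℝ)).mono' (hAF.aestronglyMeasurable (μ := P)) ?_
    filter_upwards [hA01] with ω h
    rcases h with h | h <;> simp [h]
  have hAY : Integrable (fun ω => A ω * Y ω) P := by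
    refine hYint.bdd_mul (hAF.aestronglyMeasurable (μ := P)) (c := 1) ?_
    filter_upwards [hA01] with ω h
    rcases h with h | h <;> simp [h]
  have hesm : StronglyMeasurable[m] e := stronglyMeasurable_condExp
  have hfinv_sm : StronglyMeasurable[m] (fun ω => (e ω)⁻¹) := hesm.measurable.inv.stronglyMeasurable
  have hfinv_bd : ∀ᵐ ω ∂P, ‖(e ω)⁻¹‖ ≤ ε⁻¹ := by
    filter_upwards [he] with ω h
    rw [Real.norm_eq_abs, abs_of_nonneg (inv_nonneg.mpr (le_trans hε.le h))]
    exact inv_anti₀ hε h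
  have hint : Integrable (fun ω => (e ω)⁻¹ * (A ω * Y ω)) P := by
    refine hAY.bdd_mul ?_ hfinv_bd
    exact ((hfinv_sm.mono hm).aestronglyMeasurable)
  -- conditional independence applied to truncations
  have h1 := hcondindep fY gA hfYm hgAm ⟨c', hfYb⟩ ⟨1, hgAb⟩
  have h2 : (fun ω => fY (Y ω) * gA (A ω)) =ᵐ[P] fun ω => A ω * Y ω := by
    filter_upwards [hfYeq, hgAeq] with ω hy ha
    rw [hy, ha, mul_comm]
  have hcondY : P[fun ω' => fY (Y ω')|m] =ᵐ[P] P[Y|m] :=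
    condExp_congr_ae hfYeq
  have hcondA : P[fun ω' => gA (A ω')|m] =ᵐ[P] e :=
    condExp_congr_ae hgAeq
  have h3 : P[fun ω => A ω * Y ω|m] =ᵐ[P] fun ω => (P[Y|m]) ω * e ω := by
    calc P[fun ω => A ω * Y ω|m]
        =ᵐ[P] P[fun ω => fY (Y ω) * gA (A ω)|m] := condExp_congr_ae h2.symm
      _ =ᵐ[P] fun ω => (P[fun ω' => fY (Y ω')|m]) ω * (P[fun ω' => gA (A ω')|m]) ω := h1
      _ =ᵐ[P] fun ω => (P[Y|m]) ω * e ω := hcondY.mul hcondA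
  -- pull-out property
  have h4 : P[(fun ω => (e ω)⁻¹) * (fun ω => A ω * Y ω)|m]
      =ᵐ[P] (fun ω => (e ω)⁻¹) * P[fun ω => A ω * Y ω|m] :=
    condExp_mul_of_stronglyMeasurable_left hfinv_sm (by simpa [Pi.mul_def] using hint) hAY
  have h5 : P[fun ω => (e ω)⁻¹ * (A ω * Y ω)|m] =ᵐ[P] P[Y|m] := by
    have : P[fun ω => (e ω)⁻¹ * (A ω * Y ω)|m]
        =ᵐ[P] fun ω => (e ω)⁻¹ * ((P[Y|m]) ω * e ω) := by
      refine (by simpa [Pi.mul_def] using h4 :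
        P[fun ω => (e ω)⁻¹ * (A ω * Y ω)|m] =ᵐ[P] fun ω => (e ω)⁻¹ * (P[fun ω => A ω * Y ω|m]) ω).trans ?_
      filter_upwards [h3] with ω h
      rw [h]
    refine this.trans ?_
    filter_upwards [he] with ω h
    have hne : e ω ≠ 0 := ne_of_gt (lt_of_lt_of_le hε h)
    field_simp
  calc ∫ ω, A ω * Y ω / e ω ∂P
      = ∫ ω, (e ω)⁻¹ * (A ω * Y ω) ∂P := by
        congr 1; funext ω; rw [div_eq_mul_inv]; ring
    _ = ∫ ω, (P[fun ω => (e ω)⁻¹ * (A ω * Y ω)|m]) ω ∂P := (integral_condExp hm).symm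
    _ = ∫ ω, (P[Y|m]) ω ∂P := integral_congr_ae h5
    _ = ∫ ω, Y ω ∂P := integral_condExp hm
end

section
/- Let d ≥ 1, α ∈ (0, 1], and C_H > 0. Let H : ℝ^d → ℝ be α-Hölder with constant C_H and satisfy H(u) = 0 for all u ∉ [0, 1/2]^d. Let k ≥ 1 be an integer, let x₁, …, x_k ∈ ℝ^d be points such that the translated cubes x_j + k^{−1/d}·[0, 1/2]^d, j = 1, …, k, are pairwise disjoint, let λ₁, …, λ_k ∈ {−1, +1}, and let c ∈ ℝ. Then the function f : ℝ^d → ℝ defined by f(x) = c + k^{−α/d} Σ_{j=1}^k λ_j H( k^{1/d} (x − x_j) ) is α-Hölder with constant 2·C_H (with respect to the Euclidean norm on ℝ^d). -/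
open MeasureTheory

/-- If `H : ℝ^d → ℝ` is `α`-Hölder with constant `C_H` and vanishes outside
`[0,1/2]^d`, and the translated cubes `x_j + k^{−1/d}[0,1/2]^d` are pairwise disjoint, then
`f(x) = c + k^{−α/d} Σ_j λ_j H(k^{1/d}(x − x_j))` (with each `λ_j ∈ {−1,+1}`) is `α`-Hölder
with constant `2 C_H` (Euclidean norm on `ℝ^d`). -/
theorem stmt_13 (d : ℕ) (hd : 1 ≤ d)
    (α : ℝ) (hα0 : 0 < α) (hα1 : α ≤ 1)
    (CH : ℝ) (hCH : 0 < CH)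
    (H : EuclideanSpace ℝ (Fin d) → ℝ)
    (hHolder : ∀ u v : EuclideanSpace ℝ (Fin d), |H u - H v| ≤ CH * dist u v ^ α)
    (hsupp : ∀ u : EuclideanSpace ℝ (Fin d),
      u ∉ {x : EuclideanSpace ℝ (Fin d) | ∀ i, x i ∈ Set.Icc (0 : ℝ) (1 / 2)} → H u = 0)
    (k : ℕ) (hk : 1 ≤ k) (xs : Fin k → EuclideanSpace ℝ (Fin d))
    (hdisj : ∀ j j' : Fin k, j ≠ j' →
      Disjoint
        ((fun u : EuclideanSpace ℝ (Fin d) => xs j + ((k : ℝ) ^ (-(1 : ℝ) / d)) • u) ''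
          {x : EuclideanSpace ℝ (Fin d) | ∀ i, x i ∈ Set.Icc (0 : ℝ) (1 / 2)})
        ((fun u : EuclideanSpace ℝ (Fin d) => xs j' + ((k : ℝ) ^ (-(1 : ℝ) / d)) • u) ''
          {x : EuclideanSpace ℝ (Fin d) | ∀ i, x i ∈ Set.Icc (0 : ℝ) (1 / 2)}))
    (lam : Fin k → ℝ) (hlam : ∀ j, lam j = 1 ∨ lam j = -1) (c : ℝ)
    (f : EuclideanSpace ℝ (Fin d) → ℝ)
    (hf : ∀ x, f x = c + (k : ℝ) ^ (-(α / d)) *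
      ∑ j : Fin k, lam j * H (((k : ℝ) ^ ((1 : ℝ) / d)) • (x - xs j))) :
    ∀ x y : EuclideanSpace ℝ (Fin d), |f x - f y| ≤ 2 * CH * dist x y ^ α := by
  classical
  intro x y
  have hk0 : (0 : ℝ) < k := by exact_mod_cast hk
  set S : Set (EuclideanSpace ℝ (Fin d)) :=
    {x : EuclideanSpace ℝ (Fin d) | ∀ i, x i ∈ Set.Icc (0 : ℝ) (1 / 2)} with hSdef
  set r : ℝ := (k : ℝ) ^ (-(1 : ℝ) / d) with hrdef
  set s : ℝ := (k : ℝ) ^ ((1 : ℝ) / d) with hsdef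
  have hs0 : 0 < s := Real.rpow_pos_of_pos hk0 _
  have hrs : r * s = 1 := by
    rw [hrdef, hsdef, ← Real.rpow_add hk0, show -(1:ℝ)/d + 1/d = 0 by ring, Real.rpow_zero]
  -- membership in image
  have hmem : ∀ (z : EuclideanSpace ℝ (Fin d)) (j : Fin k),
      s • (z - xs j) ∈ S →
      z ∈ (fun u : EuclideanSpace ℝ (Fin d) => xs j + r • u) '' S := by
    intro z j hz
    refine ⟨s • (z - xs j), hz, ?_⟩
    simp only
    rw [smul_smul, hrs, one_smul]
    abel
  have huniq : ∀ (z : EuclideanSpace ℝ (Fin d)) (j j' : Fin k),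
      s • (z - xs j) ∈ S → s • (z - xs j') ∈ S → j = j' := by
    intro z j j' h1 h2
    by_contra hne
    exact Set.disjoint_left.mp (hdisj j j' hne) (hmem z j h1) (hmem z j' h2)
  -- per-term bound
  have hterm : ∀ j : Fin k,
      |lam j * H (s • (x - xs j)) - lam j * H (s • (y - xs j))|
        ≤ CH * s ^ α * dist x y ^ α := by
    intro j
    have hlamabs : |lam j| = 1 := by rcases hlam j with h | h <;> simp [h]
    rw [← mul_sub, abs_mul, hlamabs, one_mul]
    have hdist : dist (s • (x - xs j)) (s • (y - xs j)) = s * dist x y := by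
      rw [dist_smul₀, Real.norm_eq_abs, abs_of_pos hs0, dist_sub_right]
    calc |H (s • (x - xs j)) - H (s • (y - xs j))|
        ≤ CH * dist (s • (x - xs j)) (s • (y - xs j)) ^ α := hHolder _ _
      _ = CH * s ^ α * dist x y ^ α := by
          rw [hdist, Real.mul_rpow hs0.le dist_nonneg, mul_assoc]
  set A : Finset (Fin k) :=
    Finset.univ.filter (fun j => s • (x - xs j) ∈ S ∨ s • (y - xs j) ∈ S) with hAdef
  have hcardA : A.card ≤ 2 := by
    have hsub : A ⊆ Finset.univ.filter (fun j => s • (x - xs j) ∈ S)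
        ∪ Finset.univ.filter (fun j => s • (y - xs j) ∈ S) := by
      intro j hj
      simp only [hAdef, Finset.mem_filter, Finset.mem_union, Finset.mem_univ, true_and] at *
      exact hj
    have h1 : (Finset.univ.filter (fun j => s • (x - xs j) ∈ S)).card ≤ 1 := by
      rw [Finset.card_le_one]
      intro a ha b hb
      simp only [Finset.mem_filter] at ha hb
      exact huniq x a b ha.2 hb.2
    have h2 : (Finset.univ.filter (fun j : Fin k => s • (y - xs j) ∈ S)).card ≤ 1 := by
      rw [Finset.card_le_one]
      intro a ha b hb
      simp only [Finset.mem_filter] at ha hb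
      exact huniq y a b ha.2 hb.2
    calc A.card ≤ _ := Finset.card_le_card hsub
      _ ≤ _ + _ := Finset.card_union_le _ _
      _ ≤ 2 := by omega
  -- restrict sum to A
  have hsum_eq : ∀ z : EuclideanSpace ℝ (Fin d),
      (∀ j ∉ A, s • (z - xs j) ∉ S) →
      True := fun _ _ => trivial
  have hrestrict :
      (∑ j : Fin k, lam j * H (s • (x - xs j))) - (∑ j : Fin k, lam j * H (s • (y - xs j)))
        = ∑ j ∈ A, (lam j * H (s • (x - xs j)) - lam j * H (s • (y - xs j))) := by
    rw [← Finset.sum_sub_distrib]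
    refine (Finset.sum_subset (Finset.subset_univ A) ?_).symm
    intro j _ hj
    simp only [hAdef, Finset.mem_filter, Finset.mem_univ, true_and, not_or] at hj
    rw [hsupp _ hj.1, hsupp _ hj.2]
    ring
  have hsumbound :
      |(∑ j : Fin k, lam j * H (s • (x - xs j))) - (∑ j : Fin k, lam j * H (s • (y - xs j)))|
        ≤ 2 * (CH * s ^ α * dist x y ^ α) := by
    rw [hrestrict]
    calc |∑ j ∈ A, (lam j * H (s • (x - xs j)) - lam j * H (s • (y - xs j)))|
        ≤ ∑ j ∈ A, |lam j * H (s • (x - xs j)) - lam j * H (s • (y - xs j))| :=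
          Finset.abs_sum_le_sum_abs _ _
      _ ≤ ∑ _j ∈ A, CH * s ^ α * dist x y ^ α := Finset.sum_le_sum fun j _ => hterm j
      _ = A.card * (CH * s ^ α * dist x y ^ α) := by rw [Finset.sum_const, nsmul_eq_mul]
      _ ≤ 2 * (CH * s ^ α * dist x y ^ α) := by
          apply mul_le_mul_of_nonneg_right
          · exact_mod_cast hcardA
          · positivity
  have hpow : (k : ℝ) ^ (-(α / d)) * s ^ α = 1 := by
    rw [hsdef, ← Real.rpow_mul hk0.le, ← Real.rpow_add hk0,
      show -(α/(d:ℝ)) + 1/d*α = 0 by ring, Real.rpow_zero]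
  rw [hf x, hf y]
  have : c + (k : ℝ) ^ (-(α / d)) * ∑ j : Fin k, lam j * H (s • (x - xs j))
      - (c + (k : ℝ) ^ (-(α / d)) * ∑ j : Fin k, lam j * H (s • (y - xs j)))
      = (k : ℝ) ^ (-(α / d)) *
        ((∑ j : Fin k, lam j * H (s • (x - xs j))) - ∑ j : Fin k, lam j * H (s • (y - xs j))) := by
    ring
  rw [this, abs_mul, abs_of_pos (Real.rpow_pos_of_pos hk0 _)]
  calc (k : ℝ) ^ (-(α / d)) * |_| ≤ (k : ℝ) ^ (-(α / d)) * (2 * (CH * s ^ α * dist x y ^ α)) :=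
        mul_le_mul_of_nonneg_left hsumbound (Real.rpow_pos_of_pos hk0 _).le
    _ = (k : ℝ) ^ (-(α / d)) * s ^ α * (2 * CH * dist x y ^ α) := by ring
    _ = 2 * CH * dist x y ^ α := by rw [hpow, one_mul]
end

section
/- Let T be a real random variable on a probability space, let b₁, b₂, b₃ > 0, and let q > 0 be real. Suppose that for every x > 0, P(|T| ≥ x) ≤ 6 · exp( − min( b₁ x², b₂ x, b₃ √x ) ). Then E[ |T|^{2q} ] ≤ 12 q ( Γ(q) / (2 b₁^q) + Γ(2q) / b₂^{2q} + 2 Γ(4q) / b₃^{4q} ), where Γ denotes the Gamma function. -/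
open MeasureTheory

/-! By the layer-cake formula, `E[|T|^{2q}] = 2q ∫₀^∞ t^{2q-1} P(|T| ≥ t) dt`. Since
`exp (-min (a, b, c)) ≤ exp (-a) + exp (-b) + exp (-c)`, the tail is at most
`6 (exp (-b₁ t²) + exp (-b₂ t) + exp (-b₃ √t))`, and each of the three resulting integrals is a
Gamma integral `∫₀^∞ t^{s-1} exp (-b t^p) dt = Γ(s/p) / (p b^{s/p})`, here with `s = 2q` and
`p = 2, 1, 1/2`. -/

open Real Set

theorem exp_neg_min_le_exp_neg_add_exp_neg (a b : ℝ) :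
    exp (-min a b) ≤ exp (-a) + exp (-b) := by
  rcases le_total a b with h | h
  · rw [min_eq_left h]; linarith [exp_pos (-b)]
  · rw [min_eq_right h]; linarith [exp_pos (-a)]

-- The powers are real (`rpow`) so that all three terms fit the Gamma integral with exponent `p`.
theorem exp_neg_min_le_sum_exp_neg_mul_rpow (b₁ b₂ b₃ x : ℝ) :
    exp (-(min (b₁ * x ^ 2) (min (b₂ * x) (b₃ * √x))))
      ≤ exp (-b₁ * x ^ (2 : ℝ)) + exp (-b₂ * x ^ (1 : ℝ)) + exp (-b₃ * x ^ (1 / 2 : ℝ)) := by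
  rw [rpow_two, rpow_one, ← sqrt_eq_rpow, neg_mul, neg_mul, neg_mul, add_assoc]
  exact (exp_neg_min_le_exp_neg_add_exp_neg _ _).trans
    (add_le_add_right (exp_neg_min_le_exp_neg_add_exp_neg _ _) _)

theorem integral_rpow_sub_one_mul_exp_neg_mul_rpow {s p b : ℝ} (hs : 0 < s) (hp : 0 < p)
    (hb : 0 < b) :
    ∫ t in Ioi (0 : ℝ), t ^ (s - 1) * exp (-b * t ^ p) = Gamma (s / p) / (p * b ^ (s / p)) := by
  rw [integral_rpow_mul_exp_neg_mul_rpow hp (by linarith) hb, sub_add_cancel, neg_div,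
    rpow_neg hb.le]
  field_simp

theorem integral_rpow_le_mul_integral_of_meas_le {α : Type*} [MeasurableSpace α] {μ : Measure α}
    {f : α → ℝ} (hf_nn : 0 ≤ᵐ[μ] f) (hf : AEMeasurable f μ) {r : ℝ} (hr : 0 < r) {g : ℝ → ℝ}
    (hg_nn : ∀ t, 0 < t → 0 ≤ g t) (hg : IntegrableOn (fun t => t ^ (r - 1) * g t) (Ioi 0))
    (htail : ∀ t, 0 < t → μ {ω | t ≤ f ω} ≤ ENNReal.ofReal (g t)) :
    ∫ ω, f ω ^ r ∂μ ≤ r * ∫ t in Ioi 0, t ^ (r - 1) * g t := by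
  have hintegrand_nn : ∀ t ∈ Ioi (0 : ℝ), 0 ≤ t ^ (r - 1) * g t := fun t ht =>
    mul_nonneg (rpow_nonneg ((mem_Ioi.mp ht).le) _) (hg_nn t ht)
  rw [integral_eq_lintegral_of_nonneg_ae (hf_nn.mono fun ω h => rpow_nonneg h r)
    (hf.pow_const r).aestronglyMeasurable]
  refine ENNReal.toReal_le_of_le_ofReal
    (mul_nonneg hr.le (setIntegral_nonneg measurableSet_Ioi hintegrand_nn)) ?_
  rw [lintegral_rpow_eq_lintegral_meas_le_mul μ hf_nn hf hr, ENNReal.ofReal_mul hr.le,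
    ofReal_integral_eq_lintegral_ofReal hg
      ((ae_restrict_iff' measurableSet_Ioi).mpr (.of_forall hintegrand_nn))]
  refine mul_le_mul_right (setLIntegral_mono' measurableSet_Ioi fun t ht => ?_) _
  rw [mul_comm, ENNReal.ofReal_mul (rpow_nonneg ((mem_Ioi.mp ht).le) _)]
  gcongr
  exact htail t ht

theorem integrableOn_rpow_sub_one_mul_sum_exp_neg_mul_rpow {s b₁ b₂ b₃ : ℝ} (hs : 0 < s)
    (hb₁ : 0 < b₁) (hb₂ : 0 < b₂) (hb₃ : 0 < b₃) :
    IntegrableOn (fun t => t ^ (s - 1) * (exp (-b₁ * t ^ (2 : ℝ)) + exp (-b₂ * t ^ (1 : ℝ))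
      + exp (-b₃ * t ^ (1 / 2 : ℝ)))) (Ioi 0) := by
  simp only [mul_add]
  have hs' : -1 < s - 1 := by linarith
  exact ((integrableOn_rpow_mul_exp_neg_mul_rpow hs' two_pos hb₁).add
    (integrableOn_rpow_mul_exp_neg_mul_rpow hs' one_pos hb₂)).add
    (integrableOn_rpow_mul_exp_neg_mul_rpow hs' one_half_pos hb₃)

theorem integral_rpow_sub_one_mul_sum_exp_neg_mul_rpow {s b₁ b₂ b₃ : ℝ} (hs : 0 < s)
    (hb₁ : 0 < b₁) (hb₂ : 0 < b₂) (hb₃ : 0 < b₃) :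
    ∫ t in Ioi 0, t ^ (s - 1) * (exp (-b₁ * t ^ (2 : ℝ)) + exp (-b₂ * t ^ (1 : ℝ))
      + exp (-b₃ * t ^ (1 / 2 : ℝ)))
      = Gamma (s / 2) / (2 * b₁ ^ (s / 2)) + Gamma s / b₂ ^ s
        + 2 * Gamma (2 * s) / b₃ ^ (2 * s) := by
  have hs' : -1 < s - 1 := by linarith
  have h₁ := integrableOn_rpow_mul_exp_neg_mul_rpow hs' two_pos hb₁
  have h₂ := integrableOn_rpow_mul_exp_neg_mul_rpow hs' one_pos hb₂
  have h₃ := integrableOn_rpow_mul_exp_neg_mul_rpow hs' one_half_pos hb₃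
  simp only [mul_add]
  rw [integral_add ?_ h₃, integral_add h₁ h₂,
    integral_rpow_sub_one_mul_exp_neg_mul_rpow hs two_pos hb₁,
    integral_rpow_sub_one_mul_exp_neg_mul_rpow hs one_pos hb₂,
    integral_rpow_sub_one_mul_exp_neg_mul_rpow hs one_half_pos hb₃,
    div_one, one_mul, show s / (1 / 2) = 2 * s by ring]
  · field_simp
  · exact h₁.add h₂

theorem stmt_15_general
    {Ω : Type*} [MeasurableSpace Ω] (P : Measure Ω)
    (T : Ω → ℝ) (hT : Measurable T)
    (b₁ b₂ b₃ : ℝ) (hb₁ : 0 < b₁) (hb₂ : 0 < b₂) (hb₃ : 0 < b₃)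
    (q : ℝ) (hq : 0 < q)
    (htail : ∀ x : ℝ, 0 < x →
      P {ω | x ≤ |T ω|}
        ≤ ENNReal.ofReal (6 * Real.exp (-(min (b₁ * x ^ 2) (min (b₂ * x) (b₃ * Real.sqrt x)))))) :
    ∫ ω, |T ω| ^ (2 * q) ∂P
      ≤ 12 * q * (Real.Gamma q / (2 * b₁ ^ q)
          + Real.Gamma (2 * q) / b₂ ^ (2 * q)
          + 2 * Real.Gamma (4 * q) / b₃ ^ (4 * q)) := by
  have h2q : 0 < 2 * q := by linarith
  have hmoment := integral_rpow_le_mul_integral_of_meas_le (.of_forall fun ω => abs_nonneg (T ω))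
    hT.abs.aemeasurable h2q (g := fun t => 6 * (exp (-b₁ * t ^ (2 : ℝ))
      + exp (-b₂ * t ^ (1 : ℝ)) + exp (-b₃ * t ^ (1 / 2 : ℝ)))) (fun t _ => by positivity)
    (by simpa only [IntegrableOn, mul_left_comm _ (6 : ℝ)] using
      (integrableOn_rpow_sub_one_mul_sum_exp_neg_mul_rpow h2q hb₁ hb₂ hb₃).const_mul 6)
    fun t ht => (htail t ht).trans <| ENNReal.ofReal_le_ofReal <| by
      gcongr; exact exp_neg_min_le_sum_exp_neg_mul_rpow b₁ b₂ b₃ t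
  simp only [mul_left_comm _ (6 : ℝ)] at hmoment
  rw [integral_const_mul, integral_rpow_sub_one_mul_sum_exp_neg_mul_rpow h2q hb₁ hb₂ hb₃,
    show 2 * q / 2 = q by ring, show 2 * (2 * q) = 4 * q by ring] at hmoment
  linarith

/-- If a real random variable `T` satisfies the tail bound
`P(|T| ≥ x) ≤ 6 exp(−min(b₁x², b₂x, b₃√x))` for all `x > 0`, then
`E[|T|^{2q}] ≤ 12q (Γ(q)/(2b₁^q) + Γ(2q)/b₂^{2q} + 2Γ(4q)/b₃^{4q})`. -/
theorem stmt_15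
    {Ω : Type*} [MeasurableSpace Ω] (P : Measure Ω) [IsProbabilityMeasure P]
    (T : Ω → ℝ) (hT : Measurable T)
    (b₁ b₂ b₃ : ℝ) (hb₁ : 0 < b₁) (hb₂ : 0 < b₂) (hb₃ : 0 < b₃)
    (q : ℝ) (hq : 0 < q)
    (htail : ∀ x : ℝ, 0 < x →
      P {ω | x ≤ |T ω|}
        ≤ ENNReal.ofReal (6 * Real.exp (-(min (b₁ * x ^ 2) (min (b₂ * x) (b₃ * Real.sqrt x)))))) :
    ∫ ω, |T ω| ^ (2 * q) ∂P
      ≤ 12 * q * (Real.Gamma q / (2 * b₁ ^ q)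
          + Real.Gamma (2 * q) / b₂ ^ (2 * q)
          + 2 * Real.Gamma (4 * q) / b₃ ^ (4 * q)) :=
  stmt_15_general P T hT b₁ b₂ b₃ hb₁ hb₂ hb₃ q hq htail
end
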